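/- (Harmonic polynomials of degree n separate antipodal pairs on the sphere.) Let n ≥ 1 and let x, x' ∈ ℝ³ satisfy x₁² + x₂² + x₃² = 1 and x'₁² + x'₂² + x'₃² = 1. If p(x) = p(x') for every polynomial p ∈ ℝ[x₁,x₂,x₃] that is homogeneous of degree n with Δp = 0 (evaluation via MvPolynomial.eval), then x' = x or x' = (−1)^(n−1)·x. -/

import Mathlib

open MvPolynomial

/-- The Laplace operator on `ℝ[x₁,x₂,x₃]`. -/
noncomputable def lap (p : MvPolynomial (Fin 3) ℝ) : MvPolynomial (Fin 3) ℝ :=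
  pderiv 0 (pderiv 0 p) + pderiv 1 (pderiv 1 p) + pderiv 2 (pderiv 2 p)

/-!
For a null vector `a ∈ ℂ³` (`a ⬝ᵥ a = 0`) the power `(a ⬝ᵥ X) ^ n` is harmonic and homogeneous
of degree `n`; so are its real and imaginary parts, which are real polynomials. Hence
`(a ⬝ᵥ x) ^ n = (a ⬝ᵥ x') ^ n` for every null `a`. Writing `a = r + i s` with `r ⊥ s` and
`|r| = |s|` and taking moduli gives `(r ⬝ᵥ x)² + (s ⬝ᵥ x)² = (r ⬝ᵥ x')² + (s ⬝ᵥ x')²`; a few such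
pairs `(r, s)` recover every product `x i * x j`, so `x' = ± x`. Finally, if `x' = -x ≠ x` then
`(a ⬝ᵥ x) ^ n = (-1) ^ n (a ⬝ᵥ x) ^ n` with `a ⬝ᵥ x ≠ 0` for a suitable null `a`, so `n` is even.
-/

namespace MvPolynomial

variable {σ R S : Type*}

section MapCoeffs

variable [CommSemiring R] [CommSemiring S]

noncomputable def mapCoeffs (f : S →+ R) : MvPolynomial σ S →+ MvPolynomial σ R where
  toFun p := .ofCoeff (Finsupp.mapRange f f.map_zero (AddMonoidAlgebra.coeff p))
  map_zero' := by ext; simp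
  map_add' p q := by ext m; exact map_add f (coeff m p) (coeff m q)

@[simp]
theorem coeff_mapCoeffs (f : S →+ R) (p : MvPolynomial σ S) (m : σ →₀ ℕ) :
    coeff m (mapCoeffs f p) = f (coeff m p) :=
  rfl

theorem mapCoeffs_monomial (f : S →+ R) (m : σ →₀ ℕ) (c : S) :
    mapCoeffs f (monomial m c) = monomial m (f c) := by
  classical
  ext d
  simp only [coeff_mapCoeffs, coeff_monomial]
  split_ifs <;> simp

theorem IsHomogeneous.mapCoeffs {p : MvPolynomial σ S} {n : ℕ} (hp : p.IsHomogeneous n)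
    (f : S →+ R) : (mapCoeffs f p).IsHomogeneous n := fun d hd =>
  hp fun h => hd (by rw [coeff_mapCoeffs, h, map_zero])

theorem pderiv_mapCoeffs (f : S →+ R) (i : σ) (p : MvPolynomial σ S) :
    pderiv i (mapCoeffs f p) = mapCoeffs f (pderiv i p) := by
  ext m
  simp only [coeff_pderiv, coeff_mapCoeffs, ← Nat.cast_succ, mul_comm _ (_ : ℕ).cast,
    ← nsmul_eq_mul, map_nsmul]

theorem eval_mapCoeffs [Algebra R S] (f : S →ₗ[R] R) (x : σ → R) (p : MvPolynomial σ S) :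
    eval x (mapCoeffs f.toAddMonoidHom p) = f (eval (algebraMap R S ∘ x) p) := by
  induction p using MvPolynomial.induction_on' with
  | monomial m c =>
    simp only [mapCoeffs_monomial, eval_monomial, Function.comp_apply, ← map_pow, ← map_finsuppProd]
    rw [← Algebra.commutes, ← Algebra.smul_def, map_smul, smul_eq_mul, mul_comm]
    rfl
  | add p q hp hq => simp only [map_add, hp, hq]

end MapCoeffs

section Laplacian

variable [Fintype σ]

noncomputable def laplacian [CommSemiring R] (p : MvPolynomial σ R) : MvPolynomial σ R :=
  ∑ i, pderiv i (pderiv i p)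

theorem laplacian_mapCoeffs [CommSemiring R] [CommSemiring S] (f : S →+ R)
    (p : MvPolynomial σ S) : laplacian (mapCoeffs f p) = mapCoeffs f (laplacian p) := by
  simp only [laplacian, pderiv_mapCoeffs, map_sum]

noncomputable def linearForm [CommSemiring R] (a : σ → R) : MvPolynomial σ R :=
  ∑ i, C (a i) * X i

variable [CommRing R] (a : σ → R)

theorem pderiv_linearForm (i : σ) : pderiv i (linearForm a) = C (a i) := by
  classical
  simp [linearForm, pderiv_X, Pi.single_apply]

theorem isHomogeneous_linearForm : (linearForm a).IsHomogeneous 1 :=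
  IsHomogeneous.sum _ _ _ fun i _ => isHomogeneous_C_mul_X (a i) i

theorem eval_linearForm (x : σ → R) : eval x (linearForm a) = a ⬝ᵥ x := by
  simp [linearForm, dotProduct]

theorem laplacian_linearForm_pow {a : σ → R} (ha : a ⬝ᵥ a = 0) (n : ℕ) :
    laplacian (linearForm a ^ n) = 0 := by
  have hsecond (i : σ) : pderiv i (pderiv i (linearForm a ^ n)) =
      (n * ((n - 1 : ℕ) * linearForm a ^ (n - 1 - 1)) : MvPolynomial σ R) * C (a i * a i) := by
    simp only [pderiv_pow, pderiv_mul, pderiv_linearForm, pderiv_C, Derivation.map_natCast, map_mul]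
    ring
  simp only [laplacian, hsecond, ← Finset.mul_sum, ← map_sum]
  rw [show ∑ i, a i * a i = a ⬝ᵥ a from rfl, ha, map_zero, mul_zero]

end Laplacian

end MvPolynomial

theorem lap_eq_laplacian (p : MvPolynomial (Fin 3) ℝ) : lap p = laplacian p := by
  rw [lap, laplacian, Fin.sum_univ_three]

theorem eval_ofReal_eq_of_forall_harmonic {σ : Type*} [Fintype σ] {n : ℕ} {x x' : σ → ℝ}
    (heval : ∀ p : MvPolynomial σ ℝ, p.IsHomogeneous n → laplacian p = 0 →
      eval x p = eval x' p)
    {P : MvPolynomial σ ℂ} (hP : P.IsHomogeneous n) (hΔ : laplacian P = 0) :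
    eval (Complex.ofReal ∘ x) P = eval (Complex.ofReal ∘ x') P := by
  have hpart (f : ℂ →ₗ[ℝ] ℝ) :
      f (eval (Complex.ofReal ∘ x) P) = f (eval (Complex.ofReal ∘ x') P) := by
    rw [← Complex.coe_algebraMap, ← eval_mapCoeffs, ← eval_mapCoeffs]
    exact heval _ (hP.mapCoeffs _) (by rw [laplacian_mapCoeffs, hΔ, map_zero])
  exact Complex.ext (hpart Complex.reLm) (hpart Complex.imLm)

theorem dotProduct_ofReal_pow_eq_of_forall_harmonic {σ : Type*} [Fintype σ] {n : ℕ}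
    {x x' : σ → ℝ}
    (heval : ∀ p : MvPolynomial σ ℝ, p.IsHomogeneous n → laplacian p = 0 →
      eval x p = eval x' p)
    {a : σ → ℂ} (ha : a ⬝ᵥ a = 0) :
    (a ⬝ᵥ (Complex.ofReal ∘ x)) ^ n = (a ⬝ᵥ (Complex.ofReal ∘ x')) ^ n := by
  have hhom : (linearForm a ^ n).IsHomogeneous n := by
    simpa using (isHomogeneous_linearForm a).pow n
  simpa only [map_pow, eval_linearForm] using
    eval_ofReal_eq_of_forall_harmonic heval hhom (laplacian_linearForm_pow ha n)

theorem sq_add_sq_dotProduct_eq_of_forall_null {σ : Type*} [Fintype σ] {n : ℕ} (hn : n ≠ 0)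
    {x x' : σ → ℝ}
    (hnull : ∀ a : σ → ℂ, a ⬝ᵥ a = 0 →
      (a ⬝ᵥ (Complex.ofReal ∘ x)) ^ n = (a ⬝ᵥ (Complex.ofReal ∘ x')) ^ n)
    {r s : σ → ℝ} (hrs : r ⬝ᵥ s = 0) (hrr : r ⬝ᵥ r = s ⬝ᵥ s) :
    (r ⬝ᵥ x) ^ 2 + (s ⬝ᵥ x) ^ 2 = (r ⬝ᵥ x') ^ 2 + (s ⬝ᵥ x') ^ 2 := by
  set a : σ → ℂ := fun i => ⟨r i, s i⟩
  have hdot (y : σ → ℝ) : a ⬝ᵥ (Complex.ofReal ∘ y) = ⟨r ⬝ᵥ y, s ⬝ᵥ y⟩ := by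
    apply Complex.ext <;> simp [a, dotProduct, Complex.re_sum, Complex.im_sum]
  have ha : a ⬝ᵥ a = 0 := by
    apply Complex.ext <;> simp only [a, dotProduct, Complex.re_sum, Complex.im_sum, Complex.mul_re,
      Complex.mul_im, Complex.zero_re, Complex.zero_im]
    · rw [Finset.sum_sub_distrib]
      exact sub_eq_zero.mpr hrr
    · simp only [mul_comm (s _), ← two_mul, ← Finset.mul_sum]
      exact mul_eq_zero_of_right 2 hrs
  have hnorm : ‖a ⬝ᵥ (Complex.ofReal ∘ x)‖ = ‖a ⬝ᵥ (Complex.ofReal ∘ x')‖ := by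
    have := congrArg norm (hnull a ha)
    rwa [norm_pow, norm_pow, pow_left_inj₀ (norm_nonneg _) (norm_nonneg _) hn] at this
  have hnormSq := congrArg (· ^ 2) hnorm
  simp only [Complex.sq_norm, hdot, Complex.normSq_mk] at hnormSq
  linear_combination hnormSq

theorem mul_eq_mul_of_forall_sq_add_sq_dotProduct_eq {x x' : Fin 3 → ℝ}
    (h : ∀ r s : Fin 3 → ℝ, r ⬝ᵥ s = 0 → r ⬝ᵥ r = s ⬝ᵥ s →
      (r ⬝ᵥ x) ^ 2 + (s ⬝ᵥ x) ^ 2 = (r ⬝ᵥ x') ^ 2 + (s ⬝ᵥ x') ^ 2)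
    (i j : Fin 3) : x' i * x' j = x i * x j := by
  simp only [dotProduct, Fin.sum_univ_three] at h
  have hsq01 := h ![1, 0, 0] ![0, 1, 0] (by simp) (by simp)
  have hsq02 := h ![1, 0, 0] ![0, 0, 1] (by simp) (by simp)
  have hsq12 := h ![0, 1, 0] ![0, 0, 1] (by simp) (by simp)
  -- with every `x i ^ 2` known, the pair `(e i + e j, √2 • e k)` isolates `x i * x j`
  have hmix01 := h ![1, 1, 0] ![0, 0, √2] (by simp) (by simp; norm_num)
  have hmix02 := h ![1, 0, 1] ![0, √2, 0] (by simp) (by simp; norm_num)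
  have hmix12 := h ![0, 1, 1] ![√2, 0, 0] (by simp) (by simp; norm_num)
  simp only [Fin.isValue, Matrix.cons_val_zero, Matrix.cons_val_one, Matrix.cons_val, one_mul,
    zero_mul, add_zero, zero_add, mul_pow, Nat.ofNat_nonneg, Real.sq_sqrt]
    at hsq01 hsq02 hsq12 hmix01 hmix02 hmix12
  fin_cases i <;> fin_cases j <;> simp only [Fin.zero_eta, Fin.mk_one, Fin.reduceFinMk] <;> linarith

theorem eq_or_eq_neg_of_forall_mul_eq_mul {ι K : Type*} [Field K] {x y : ι → K}
    (h : ∀ i j, y i * y j = x i * x j) : y = x ∨ y = -x := by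
  by_cases hx : x = 0
  · left
    ext i
    simpa [hx] using h i i
  obtain ⟨k, hk⟩ : ∃ k, x k ≠ 0 := Function.ne_iff.mp hx
  have hyk : y k ≠ 0 := fun h0 => hk (mul_self_eq_zero.mp (by rw [← h k k, h0, zero_mul]))
  have hy (j : ι) : y j = x k / y k * x j := by
    rw [div_mul_eq_mul_div, eq_div_iff hyk, mul_comm, h k j]
  have hc : x k / y k * (x k / y k) = 1 := by
    rw [div_mul_div_comm, ← h k k, div_self (mul_ne_zero hyk hyk)]
  rcases mul_self_eq_one_iff.mp hc with hc | hc
  · left; ext j; rw [hy j, hc, one_mul]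
  · right; ext j; rw [hy j, hc, neg_one_mul, Pi.neg_apply]

theorem eq_zero_of_forall_null_dotProduct_eq_zero {x : Fin 3 → ℝ}
    (h : ∀ a : Fin 3 → ℂ, a ⬝ᵥ a = 0 → a ⬝ᵥ (Complex.ofReal ∘ x) = 0) : x = 0 := by
  obtain ⟨hx0, hx1⟩ : x 0 = 0 ∧ x 1 = 0 := by
    simpa [dotProduct, Fin.sum_univ_three, Complex.ext_iff] using h ![1, Complex.I, 0] (by simp)
  obtain ⟨hx2, -⟩ : x 2 = 0 ∧ x 1 = 0 := by
    simpa [dotProduct, Fin.sum_univ_three, Complex.ext_iff] using h ![0, Complex.I, 1] (by simp)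
  ext i
  fin_cases i <;> assumption

theorem even_or_eq_zero_of_eq_neg {n : ℕ} {x x' : Fin 3 → ℝ}
    (hnull : ∀ a : Fin 3 → ℂ, a ⬝ᵥ a = 0 →
      (a ⬝ᵥ (Complex.ofReal ∘ x)) ^ n = (a ⬝ᵥ (Complex.ofReal ∘ x')) ^ n)
    (hneg : x' = -x) : Even n ∨ x = 0 := by
  refine (Nat.even_or_odd n).imp id fun hodd => ?_
  refine eq_zero_of_forall_null_dotProduct_eq_zero fun a ha => eq_zero_of_pow_eq_zero (n := n) ?_
  have := hnull a ha
  rwa [hneg, show Complex.ofReal ∘ (-x) = -(Complex.ofReal ∘ x) by ext; simp, dotProduct_neg,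
    hodd.neg_pow, self_eq_neg] at this

theorem harmonic_separate_points_general (n : ℕ) (hn : 1 ≤ n) (x x' : Fin 3 → ℝ)
    (heval : ∀ p : MvPolynomial (Fin 3) ℝ, p.IsHomogeneous n → lap p = 0 →
      eval x p = eval x' p) :
    x' = x ∨ x' = ((-1 : ℝ) ^ (n - 1)) • x := by
  have hnull (a : Fin 3 → ℂ) (ha : a ⬝ᵥ a = 0) :=
    dotProduct_ofReal_pow_eq_of_forall_harmonic
      (fun p hp hΔ => heval p hp (by rwa [lap_eq_laplacian])) ha
  have hprod := mul_eq_mul_of_forall_sq_add_sq_dotProduct_eq fun r s hrs hrr =>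
    sq_add_sq_dotProduct_eq_of_forall_null (by omega) hnull hrs hrr
  rcases eq_or_eq_neg_of_forall_mul_eq_mul hprod with h | h
  · exact Or.inl h
  rcases even_or_eq_zero_of_eq_neg hnull h with heven | rfl
  · right
    rw [h, (Nat.Even.sub_odd hn heven odd_one).neg_one_pow, neg_one_smul]
  · left
    simpa using h

/-- Harmonic homogeneous polynomials of degree `n` separate antipodal pairs on the
unit sphere. -/
theorem harmonic_separate_points (n : ℕ) (hn : 1 ≤ n) (x x' : Fin 3 → ℝ)
    (hx : x 0 ^ 2 + x 1 ^ 2 + x 2 ^ 2 = 1) (hx' : x' 0 ^ 2 + x' 1 ^ 2 + x' 2 ^ 2 = 1)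
    (heval : ∀ p : MvPolynomial (Fin 3) ℝ, p.IsHomogeneous n → lap p = 0 →
      eval x p = eval x' p) :
    x' = x ∨ x' = ((-1 : ℝ) ^ (n - 1)) • x :=
  harmonic_separate_points_general n hn x x' heval
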